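/- arXiv:2001.00983 — 6 statements merged into one kernel-verified Lean document; each statement's English description precedes it below -/
import Mathlib

section
/- For any subset Λ ⊆ I_N with σₙ > 0 for n ∈ Λ, the thresholded projection P_Λ satisfies ‖f − P_Λ f‖ ≤ ‖f − T_N z‖ + (max_{n∈I_N∖Λ} √σₙ) ‖z‖ for every z ∈ ℂᴺ. -/
/-!
The vectors `ξₙ = T vₙ` are orthogonal with `‖ξₙ‖² = σₙ`, because `vₙ` is an eigenvector of the
Gram matrix. Hence `P_Λ f` is the best approximation of `f` from `span {ξₙ : n ∈ Λ}`. Expanding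
`z` in the orthonormal basis `(vₙ)` gives `T z = ∑ ⟪vₙ, z⟫ ξₙ`; its part over `Λ` is a competitor,
whose distance to `T z` is the tail over `I_N ∖ Λ`, of norm at most `max √σₙ · ‖z‖` by Parseval.
-/

open Finset

open scoped InnerProductSpace

section Orthogonal

variable {𝕜 E : Type*} [RCLike 𝕜] [NormedAddCommGroup E] [InnerProductSpace 𝕜 E]

theorem norm_le_norm_add_of_inner_eq_zero {x y : E} (h : ⟪x, y⟫_𝕜 = 0) : ‖x‖ ≤ ‖x + y‖ := by
  refine le_of_pow_le_pow_left₀ two_ne_zero (norm_nonneg _) ?_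
  rw [sq, sq, norm_add_sq_eq_norm_sq_add_norm_sq_of_inner_eq_zero x y h]
  exact le_add_of_nonneg_right (mul_self_nonneg _)

variable {ι : Type*} [DecidableEq ι] {ξ : ι → E} {σ : ι → ℝ}

theorem inner_sum_smul_of_orthogonal
    (hξ : ∀ m n, ⟪ξ m, ξ n⟫_𝕜 = if m = n then (σ n : 𝕜) else 0)
    (S : Finset ι) (a : ι → 𝕜) (m : ι) :
    ⟪ξ m, ∑ n ∈ S, a n • ξ n⟫_𝕜 = if m ∈ S then a m * σ m else 0 := by
  simp only [inner_sum, inner_smul_right, hξ, mul_ite, mul_zero, sum_ite_eq]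

theorem norm_sq_sum_smul_of_orthogonal
    (hξ : ∀ m n, ⟪ξ m, ξ n⟫_𝕜 = if m = n then (σ n : 𝕜) else 0)
    (S : Finset ι) (a : ι → 𝕜) :
    ‖∑ n ∈ S, a n • ξ n‖ ^ 2 = ∑ n ∈ S, ‖a n‖ ^ 2 * σ n := by
  rw [← inner_self_eq_norm_sq (𝕜 := 𝕜), sum_inner, map_sum]
  refine sum_congr rfl fun n hn => ?_
  rw [inner_smul_left, inner_sum_smul_of_orthogonal hξ, if_pos hn, ← mul_assoc,
    RCLike.conj_mul, ← RCLike.ofReal_pow, ← RCLike.ofReal_mul, RCLike.ofReal_re]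

theorem norm_sum_smul_le_of_orthogonal [Fintype ι]
    (hξ : ∀ m n, ⟪ξ m, ξ n⟫_𝕜 = if m = n then (σ n : 𝕜) else 0)
    (S : Finset ι) (a : ι → 𝕜) {M : ℝ} (hM : 0 ≤ M) (hσM : ∀ n ∈ S, √(σ n) ≤ M) :
    ‖∑ n ∈ S, a n • ξ n‖ ≤ M * √(∑ n, ‖a n‖ ^ 2) := by
  rw [← Real.sqrt_sq hM, ← Real.sqrt_mul (sq_nonneg M), ← Real.sqrt_sq (norm_nonneg _),
    norm_sq_sum_smul_of_orthogonal hξ]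
  gcongr
  calc ∑ n ∈ S, ‖a n‖ ^ 2 * σ n ≤ ∑ n ∈ S, ‖a n‖ ^ 2 * M ^ 2 := by
        gcongr with n hn
        exact (Real.sqrt_le_iff.1 (hσM n hn)).2
    _ ≤ ∑ n, ‖a n‖ ^ 2 * M ^ 2 :=
        sum_le_sum_of_subset_of_nonneg (subset_univ S) fun _ _ _ => by positivity
    _ = M ^ 2 * ∑ n, ‖a n‖ ^ 2 := by rw [mul_sum]; simp only [mul_comm]

theorem inner_sub_sum_inner_div_smul_of_orthogonal
    (hξ : ∀ m n, ⟪ξ m, ξ n⟫_𝕜 = if m = n then (σ n : 𝕜) else 0)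
    {Λ : Finset ι} (hσ : ∀ n ∈ Λ, σ n ≠ 0) (f : E) {m : ι} (hm : m ∈ Λ) :
    ⟪ξ m, f - ∑ n ∈ Λ, (⟪ξ n, f⟫_𝕜 / (σ n : 𝕜)) • ξ n⟫_𝕜 = 0 := by
  rw [inner_sub_right, inner_sum_smul_of_orthogonal hξ, if_pos hm,
    div_mul_cancel₀ _ (RCLike.ofReal_ne_zero.2 (hσ m hm)), sub_self]

theorem norm_sub_sum_inner_div_smul_le_of_orthogonal
    (hξ : ∀ m n, ⟪ξ m, ξ n⟫_𝕜 = if m = n then (σ n : 𝕜) else 0)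
    {Λ : Finset ι} (hσ : ∀ n ∈ Λ, σ n ≠ 0) (f : E) (a : ι → 𝕜) :
    ‖f - ∑ n ∈ Λ, (⟪ξ n, f⟫_𝕜 / (σ n : 𝕜)) • ξ n‖ ≤ ‖f - ∑ n ∈ Λ, a n • ξ n‖ := by
  set P := ∑ n ∈ Λ, (⟪ξ n, f⟫_𝕜 / (σ n : 𝕜)) • ξ n
  have hperp : ⟪f - P, P - ∑ n ∈ Λ, a n • ξ n⟫_𝕜 = 0 := by
    rw [← inner_conj_symm, ← sum_sub_distrib, sum_inner, map_eq_zero]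
    refine sum_eq_zero fun n hn => ?_
    rw [← sub_smul, inner_smul_left, inner_sub_sum_inner_div_smul_of_orthogonal hξ hσ f hn,
      mul_zero]
  simpa using norm_le_norm_add_of_inner_eq_zero hperp

end Orthogonal

section Synthesis

open Matrix

variable {𝕜 E : Type*} [RCLike 𝕜] [NormedAddCommGroup E] [InnerProductSpace 𝕜 E]
  {κ : Type*} [Fintype κ] (φ : κ → E)

theorem inner_sum_smul_eigenvectors_gram {ι : Type*} [DecidableEq ι]
    {v : ι → EuclideanSpace 𝕜 κ} (hv : Orthonormal 𝕜 v) {σ : ι → ℝ}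
    (heig : ∀ n, gram 𝕜 φ *ᵥ (v n).ofLp = (σ n : 𝕜) • (v n).ofLp) (m n : ι) :
    ⟪∑ j, v m j • φ j, ∑ j, v n j • φ j⟫_𝕜 = if m = n then (σ n : 𝕜) else 0 := by
  rw [← star_dotProduct_gram_mulVec, heig, dotProduct_smul, dotProduct_comm,
    ← EuclideanSpace.inner_eq_star_dotProduct, orthonormal_iff_ite.1 hv m n]
  split_ifs <;> simp

theorem sum_smul_eq_sum_inner_smul_sum_smul (b : OrthonormalBasis κ 𝕜 (EuclideanSpace 𝕜 κ))
    (z : EuclideanSpace 𝕜 κ) :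
    ∑ j, z j • φ j = ∑ n, ⟪b n, z⟫_𝕜 • ∑ j, b n j • φ j := by
  let L : EuclideanSpace 𝕜 κ →ₗ[𝕜] E :=
    (Fintype.linearCombination 𝕜 φ).comp (WithLp.linearEquiv 2 𝕜 (κ → 𝕜)).toLinearMap
  have hL (w : EuclideanSpace 𝕜 κ) : L w = ∑ j, w j • φ j := Fintype.linearCombination_apply ..
  simp only [← hL]
  conv_lhs => rw [← b.sum_repr' z]
  simp only [map_sum, map_smul]

end Synthesis

open scoped ComplexInnerProductSpace

theorem stmt_6 {H : Type*} [NormedAddCommGroup H] [InnerProductSpace ℂ H]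
    {N : ℕ} (φ : Fin N → H) (σ : Fin N → ℝ)
    (v : Fin N → EuclideanSpace ℂ (Fin N)) (hv : Orthonormal ℂ v)
    (G : Matrix (Fin N) (Fin N) ℂ) (hG : ∀ m k, G m k = ⟪φ m, φ k⟫)
    (heig : ∀ n i, G.mulVec (fun j => v n j) i = (σ n : ℂ) * v n i)
    (T : EuclideanSpace ℂ (Fin N) → H) (hT : ∀ z, T z = ∑ n, z n • φ n)
    (ξ : Fin N → H) (hξ : ∀ n, ξ n = T (v n))
    (Λ : Finset (Fin N)) (hσpos : ∀ n ∈ Λ, 0 < σ n)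
    (hne : (Finset.univ \ Λ).Nonempty)
    (f : H) (z : EuclideanSpace ℂ (Fin N)) :
    ‖f - ∑ n ∈ Λ, (⟪ξ n, f⟫ / (σ n : ℂ)) • ξ n‖ ≤
      ‖f - T z‖ + ((Finset.univ \ Λ).sup' hne fun n => Real.sqrt (σ n)) * ‖z‖ := by
  obtain rfl : G = Matrix.gram ℂ φ := Matrix.ext hG
  have hξ_orth : ∀ m n, ⟪ξ m, ξ n⟫ = if m = n then (σ n : ℂ) else 0 := by
    simp only [hξ, hT]
    exact inner_sum_smul_eigenvectors_gram φ hv fun n => funext (heig n)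
  obtain ⟨b, rfl⟩ : ∃ b : OrthonormalBasis (Fin N) ℂ (EuclideanSpace ℂ (Fin N)), ⇑b = v :=
    ⟨.mk hv (hv.linearIndependent.span_eq_top_of_card_eq_finrank' (by simp)).ge,
      OrthonormalBasis.coe_mk _ _⟩
  have hTz : T z = ∑ n, ⟪b n, z⟫ • ξ n := by
    simp only [hξ, hT]
    exact sum_smul_eq_sum_inner_smul_sum_smul φ b z
  set M := (univ \ Λ).sup' hne fun n => √(σ n)
  have hM : ∀ n ∈ univ \ Λ, √(σ n) ≤ M := fun n hn => le_sup' (fun n => √(σ n)) hn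
  have hz : √(∑ n, ‖⟪b n, z⟫‖ ^ 2) = ‖z‖ := by
    rw [b.sum_sq_norm_inner_right, Real.sqrt_sq (norm_nonneg z)]
  calc ‖f - ∑ n ∈ Λ, (⟪ξ n, f⟫ / (σ n : ℂ)) • ξ n‖
      ≤ ‖f - ∑ n ∈ Λ, ⟪b n, z⟫ • ξ n‖ :=
        norm_sub_sum_inner_div_smul_le_of_orthogonal hξ_orth (fun n hn => (hσpos n hn).ne') f _
    _ = ‖(f - T z) + ∑ n ∈ univ \ Λ, ⟪b n, z⟫ • ξ n‖ := by
        rw [hTz, ← sum_sdiff (subset_univ Λ)]; abel_nf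
    _ ≤ ‖f - T z‖ + M * ‖z‖ := by
        grw [norm_add_le, ← hz, norm_sum_smul_le_of_orthogonal hξ_orth _ _
          ((Real.sqrt_nonneg _).trans (hM _ hne.choose_spec)) hM]
end

section
/- For any Λ ⊆ I_N with σₙ > 0 for n ∈ Λ, the coefficient vector x_Λ = Σ_{n∈Λ} (⟨y, vₙ⟩/σₙ) vₙ, where y = T_N* f, satisfies ‖x_Λ‖ ≤ (1/min_{n∈Λ}√σₙ) ‖f − T_N z‖ + ‖z‖ for every z ∈ ℂᴺ. -/
open scoped ComplexInnerProductSpace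

lemma aux_norm_sum_sq {E : Type*} [NormedAddCommGroup E] [InnerProductSpace ℂ E]
    {ι : Type*} {v : ι → E} (hv : Orthonormal ℂ v) (l : ι → ℂ) (s : Finset ι) :
    ‖∑ i ∈ s, l i • v i‖ ^ 2 = ∑ i ∈ s, ‖l i‖ ^ 2 := by
  have h := hv.inner_sum l l s
  rw [inner_self_eq_norm_sq_to_K] at h
  simp only [RCLike.conj_mul] at h
  exact_mod_cast h

theorem stmt_7 {H : Type*} [NormedAddCommGroup H] [InnerProductSpace ℂ H]
    {N : ℕ} (φ : Fin N → H) (σ : Fin N → ℝ)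
    (v : Fin N → EuclideanSpace ℂ (Fin N)) (hv : Orthonormal ℂ v)
    (G : Matrix (Fin N) (Fin N) ℂ) (hG : ∀ m k, G m k = ⟪φ m, φ k⟫)
    (heig : ∀ n i, G.mulVec (fun j => v n j) i = (σ n : ℂ) * v n i)
    (T : EuclideanSpace ℂ (Fin N) → H) (hT : ∀ z, T z = ∑ n, z n • φ n)
    (ξ : Fin N → H) (hξ : ∀ n, ξ n = T (v n))
    (Λ : Finset (Fin N)) (hΛne : Λ.Nonempty) (hσpos : ∀ n ∈ Λ, 0 < σ n)
    (f : H) (y : EuclideanSpace ℂ (Fin N)) (hy : ∀ n, y n = ⟪φ n, f⟫)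
    (z : EuclideanSpace ℂ (Fin N)) :
    ‖∑ n ∈ Λ, (⟪v n, y⟫ / (σ n : ℂ)) • v n‖ ≤
      (1 / Λ.inf' hΛne fun n => Real.sqrt (σ n)) * ‖f - T z‖ + ‖z‖ := by
  classical
  set g : H := f - T z with hgdef
  set m : ℝ := Λ.inf' hΛne fun n => Real.sqrt (σ n) with hmdef
  have hmpos : 0 < m := by
    rw [hmdef, Finset.lt_inf'_iff]
    exact fun n hn => Real.sqrt_pos.2 (hσpos n hn)
  have hmle : ∀ n ∈ Λ, m ≤ Real.sqrt (σ n) := fun n hn => Finset.inf'_le _ hn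
  -- key computation: inner product of synthesized vectors
  have hTT : ∀ a b : EuclideanSpace ℂ (Fin N),
      ⟪T a, T b⟫ = ∑ j, (starRingEnd ℂ) (a j) * (G.mulVec (fun k => b k) j) := by
    intro a b
    simp only [hT, sum_inner, inner_sum, inner_smul_left, inner_smul_right,
      Matrix.mulVec, dotProduct, hG, Finset.mul_sum]
    rw [Finset.sum_comm]
    congr 1; ext j; congr 1; ext k; ring
  have hξξ : ∀ mm n, ⟪ξ mm, ξ n⟫ = (σ n : ℂ) * ⟪v mm, v n⟫ := by
    intro mm n
    rw [hξ, hξ, hTT]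
    simp only [heig, PiLp.inner_apply, RCLike.inner_apply, Finset.mul_sum]
    congr 1; ext j; ring
  have hξf : ∀ n, ⟪ξ n, f⟫ = ⟪v n, y⟫ := by
    intro n
    rw [hξ, hT]
    simp only [sum_inner, inner_smul_left, PiLp.inner_apply, RCLike.inner_apply, hy]
    exact Finset.sum_congr rfl (fun j _ => mul_comm _ _)
  have hξTz : ∀ n, ⟪ξ n, T z⟫ = (σ n : ℂ) * ⟪v n, z⟫ := by
    intro n
    have h1 : ⟪T z, ξ n⟫ = ∑ j, (starRingEnd ℂ) (z j) * ((σ n : ℂ) * v n j) := by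
      rw [hξ, hTT]; simp only [heig]
    have h2 : ⟪ξ n, T z⟫ = (starRingEnd ℂ) ⟪T z, ξ n⟫ := (inner_conj_symm _ _).symm
    rw [h2, h1]
    simp only [map_sum, map_mul, RingHomCompTriple.comp_apply, RingHom.id_apply,
      PiLp.inner_apply, RCLike.inner_apply, Finset.mul_sum]
    congr 1; ext j
    rw [Complex.conj_ofReal]
    ring
  -- orthogonality of ξ's with weights
  have hvite : ∀ i j, ⟪v i, v j⟫ = if i = j then (1 : ℂ) else 0 :=
    fun i j => orthonormal_iff_ite.mp hv i j
  -- decompose the sum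
  have hdecomp : (∑ n ∈ Λ, (⟪v n, y⟫ / (σ n : ℂ)) • v n) =
      (∑ n ∈ Λ, (⟪ξ n, g⟫ / (σ n : ℂ)) • v n) + ∑ n ∈ Λ, ⟪v n, z⟫ • v n := by
    rw [← Finset.sum_add_distrib]
    apply Finset.sum_congr rfl
    intro n hn
    rw [← add_smul]
    congr 1
    have hσn : (σ n : ℂ) ≠ 0 := by
      exact_mod_cast (hσpos n hn).ne'
    have : ⟪v n, y⟫ = ⟪ξ n, g⟫ + (σ n : ℂ) * ⟪v n, z⟫ := by
      rw [← hξf, ← hξTz, hgdef, inner_sub_right]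
      ring
    rw [this]
    field_simp
  rw [hdecomp]
  -- bound the second sum via Bessel
  have hB : ‖∑ n ∈ Λ, ⟪v n, z⟫ • v n‖ ≤ ‖z‖ := by
    have h1 : ‖∑ n ∈ Λ, ⟪v n, z⟫ • v n‖ ^ 2 = ∑ n ∈ Λ, ‖⟪v n, z⟫‖ ^ 2 :=
      aux_norm_sum_sq hv _ Λ
    have h2 : ∑ n ∈ Λ, ‖⟪v n, z⟫‖ ^ 2 ≤ ‖z‖ ^ 2 := hv.sum_inner_products_le z
    have := h1.trans_le h2
    exact (pow_le_pow_iff_left₀ (norm_nonneg _) (norm_nonneg _) two_ne_zero).mp this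
  -- Bessel for the weighted family
  have hone : Orthonormal ℂ (fun n : ↥Λ => ((Real.sqrt (σ n))⁻¹ : ℂ) • ξ n) := by
    rw [orthonormal_iff_ite]
    intro i j
    rw [inner_smul_left, inner_smul_right, hξξ, hvite]
    by_cases hij : i = j
    · subst hij
      have hσ : 0 < σ (i : Fin N) := hσpos _ i.2
      have hreal : (Real.sqrt (σ (i : Fin N)))⁻¹ * ((Real.sqrt (σ (i : Fin N)))⁻¹ * (σ (i : Fin N) * 1)) = 1 := by
        rw [mul_one, ← mul_assoc, ← mul_inv, Real.mul_self_sqrt hσ.le]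
        field_simp
      simp only [if_true, eq_self_iff_true, if_pos rfl, map_inv₀, Complex.conj_ofReal]
      exact_mod_cast hreal
    · have : ((i : Fin N) = (j : Fin N)) ↔ (i = j) := Subtype.coe_injective.eq_iff
      rw [if_neg (fun h => hij (Subtype.coe_injective h)), if_neg hij]
      ring
  have hBessel : ∑ n ∈ Λ, ‖⟪ξ n, g⟫‖ ^ 2 / σ n ≤ ‖g‖ ^ 2 := by
    have h1 := hone.sum_inner_products_le (s := (Finset.univ : Finset ↥Λ)) g
    calc ∑ n ∈ Λ, ‖⟪ξ n, g⟫‖ ^ 2 / σ n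
        = ∑ n : ↥Λ, ‖⟪((Real.sqrt (σ n))⁻¹ : ℂ) • ξ (n : Fin N), g⟫‖ ^ 2 := by
          rw [← Finset.sum_coe_sort Λ (fun n => ‖⟪ξ n, g⟫‖ ^ 2 / σ n)]
          apply Finset.sum_congr rfl
          intro n _
          rw [inner_smul_left, norm_mul, mul_pow]
          have hσ : 0 < σ (n : Fin N) := hσpos _ n.2
          rw [map_inv₀, Complex.conj_ofReal, norm_inv, Complex.norm_real,
            Real.norm_eq_abs, abs_of_nonneg (Real.sqrt_nonneg _), inv_pow,
            Real.sq_sqrt hσ.le]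
          ring
      _ ≤ ‖g‖ ^ 2 := h1
  -- bound the first sum
  have hA : ‖∑ n ∈ Λ, (⟪ξ n, g⟫ / (σ n : ℂ)) • v n‖ ≤ (1 / m) * ‖g‖ := by
    have h1 : ‖∑ n ∈ Λ, (⟪ξ n, g⟫ / (σ n : ℂ)) • v n‖ ^ 2
        = ∑ n ∈ Λ, ‖⟪ξ n, g⟫ / (σ n : ℂ)‖ ^ 2 := aux_norm_sum_sq hv _ Λ
    have h2 : ∑ n ∈ Λ, ‖⟪ξ n, g⟫ / (σ n : ℂ)‖ ^ 2
        ≤ (1 / m ^ 2) * ∑ n ∈ Λ, ‖⟪ξ n, g⟫‖ ^ 2 / σ n := by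
      rw [Finset.mul_sum]
      apply Finset.sum_le_sum
      intro n hn
      have hσ : 0 < σ n := hσpos n hn
      rw [norm_div, div_pow, Complex.norm_real, Real.norm_eq_abs, abs_of_pos hσ]
      have hm2 : m ^ 2 ≤ σ n := by
        have := hmle n hn
        calc m ^ 2 ≤ Real.sqrt (σ n) ^ 2 := by
              apply pow_le_pow_left₀ hmpos.le this
          _ = σ n := Real.sq_sqrt hσ.le
      have hEq : 1 / m ^ 2 * (‖⟪ξ n, g⟫‖ ^ 2 / σ n) = ‖⟪ξ n, g⟫‖ ^ 2 / (m ^ 2 * σ n) := by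
        ring
      rw [hEq]
      gcongr
      nlinarith [hmpos, hσ, hm2]
    have h3 : ‖∑ n ∈ Λ, (⟪ξ n, g⟫ / (σ n : ℂ)) • v n‖ ^ 2 ≤ ((1 / m) * ‖g‖) ^ 2 := by
      rw [h1, mul_pow, div_pow, one_pow]
      exact h2.trans (by
        apply mul_le_mul_of_nonneg_left hBessel
        positivity)
    exact (pow_le_pow_iff_left₀ (norm_nonneg _) (by positivity) two_ne_zero).mp h3
  calc ‖(∑ n ∈ Λ, (⟪ξ n, g⟫ / (σ n : ℂ)) • v n) + ∑ n ∈ Λ, ⟪v n, z⟫ • v n‖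
      ≤ ‖∑ n ∈ Λ, (⟪ξ n, g⟫ / (σ n : ℂ)) • v n‖ + ‖∑ n ∈ Λ, ⟪v n, z⟫ • v n‖ :=
        norm_add_le _ _
    _ ≤ (1 / m) * ‖g‖ + ‖z‖ := add_le_add hA hB
end

section
/- For any f ∈ H and the TSVD approximation with truncation parameter ε > 0 (keeping Λ = {n : σₙ > ε}), the error satisfies ‖f − P_Λ f‖ ≤ ‖f − T_N z‖ + √ε ‖z‖ for all z ∈ ℂᴺ. -/
/-!
Since the `vₙ` are orthonormal eigenvectors of the Gram matrix, the vectors `ξₙ = T vₙ` are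
pairwise orthogonal with `‖ξₙ‖² = σₙ`. Hence `P_Λ` is the orthogonal projection onto
`span {ξₙ : n ∈ Λ}`, and `‖f - P_Λ f‖ ≤ ‖f - y‖` for every `y` in that span. Expanding
`z = ∑ cₙ vₙ` gives `T z = ∑ cₙ ξₙ`; taking for `y` the part of this sum over `Λ` leaves the error
`‖f - T z‖` plus the tail `∑_{n ∉ Λ} cₙ ξₙ`, whose squared norm is `∑_{n ∉ Λ} σₙ |cₙ|² ≤ ε ‖z‖²`.
-/

open scoped ComplexInnerProductSpace InnerProductSpace

open Submodule Matrix

theorem Submodule.norm_sub_starProjection_le {𝕜 E : Type*} [RCLike 𝕜] [NormedAddCommGroup E]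
    [InnerProductSpace 𝕜 E] {K : Submodule 𝕜 E} [K.HasOrthogonalProjection] (w : E) {y : E}
    (hy : y ∈ K) : ‖w - K.starProjection w‖ ≤ ‖w - y‖ := by
  rw [starProjection_minimal]
  exact ciInf_le ⟨0, Set.forall_mem_range.2 fun _ => norm_nonneg _⟩ (⟨y, hy⟩ : K)

section PairwiseOrthogonal

variable {𝕜 E ι : Type*} [RCLike 𝕜] [NormedAddCommGroup E] [InnerProductSpace 𝕜 E] {ξ : ι → E}

theorem inner_sum_smul_of_pairwise_orthogonal (hξ : Pairwise fun m n => ⟪ξ m, ξ n⟫_𝕜 = 0)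
    {s : Finset ι} {m : ι} (hm : m ∈ s) (a : ι → 𝕜) :
    ⟪ξ m, ∑ n ∈ s, a n • ξ n⟫_𝕜 = a m * (‖ξ m‖ : 𝕜) ^ 2 := by
  rw [inner_sum, Finset.sum_eq_single_of_mem m hm fun n _ hnm => by
    rw [inner_smul_right, hξ hnm.symm, mul_zero], inner_smul_right, inner_self_eq_norm_sq_to_K]

theorem norm_sum_smul_sq_of_pairwise_orthogonal (hξ : Pairwise fun m n => ⟪ξ m, ξ n⟫_𝕜 = 0)
    (s : Finset ι) (a : ι → 𝕜) :
    ‖∑ n ∈ s, a n • ξ n‖ ^ 2 = ∑ n ∈ s, ‖a n‖ ^ 2 * ‖ξ n‖ ^ 2 := by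
  have h : ⟪∑ n ∈ s, a n • ξ n, ∑ n ∈ s, a n • ξ n⟫_𝕜 =
      ∑ n ∈ s, ((‖a n‖ ^ 2 * ‖ξ n‖ ^ 2 : ℝ) : 𝕜) := by
    rw [sum_inner]
    refine Finset.sum_congr rfl fun n hn => ?_
    rw [inner_smul_left, inner_sum_smul_of_pairwise_orthogonal hξ hn, ← mul_assoc,
      RCLike.conj_mul]
    push_cast
    rfl
  rw [inner_self_eq_norm_sq_to_K] at h
  exact_mod_cast h

theorem norm_sum_smul_le_of_pairwise_orthogonal (hξ : Pairwise fun m n => ⟪ξ m, ξ n⟫_𝕜 = 0)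
    {s : Finset ι} {ε : ℝ} (hε : ∀ n ∈ s, ‖ξ n‖ ^ 2 ≤ ε) (a : ι → 𝕜) :
    ‖∑ n ∈ s, a n • ξ n‖ ≤ √ε * √(∑ n ∈ s, ‖a n‖ ^ 2) := by
  rw [← Real.sqrt_mul' _ (by positivity)]
  refine Real.le_sqrt_of_sq_le ?_
  rw [norm_sum_smul_sq_of_pairwise_orthogonal hξ, Finset.mul_sum]
  exact Finset.sum_le_sum fun n hn => by
    rw [mul_comm ε]
    exact mul_le_mul_of_nonneg_left (hε n hn) (by positivity)

theorem starProjection_span_image_eq_sum [DecidableEq E]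
    (hξ : Pairwise fun m n => ⟪ξ m, ξ n⟫_𝕜 = 0) (s : Finset ι) (w : E) :
    (span 𝕜 (s.image ξ : Set E)).starProjection w =
      ∑ n ∈ s, (⟪ξ n, w⟫_𝕜 / (‖ξ n‖ : 𝕜) ^ 2) • ξ n := by
  refine eq_starProjection_of_mem_of_inner_eq_zero
    (sum_mem fun n hn => smul_mem _ _ (subset_span (Finset.mem_image_of_mem ξ hn))) fun y hy => ?_
  refine LinearMap.mem_ker.1 <| (span_le (p := LinearMap.ker (innerₛₗ 𝕜 _))).2 ?_ hy
  intro x hx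
  obtain ⟨m, hm, rfl⟩ := Finset.mem_image.1 hx
  rw [SetLike.mem_coe, LinearMap.mem_ker, innerₛₗ_apply_apply, ← inner_conj_symm, map_eq_zero,
    inner_sub_right, inner_sum_smul_of_pairwise_orthogonal hξ hm, sub_eq_zero]
  rcases eq_or_ne (ξ m) 0 with h | h
  · simp [h]
  · rw [div_mul_cancel₀ _ (by simpa using h)]

theorem norm_sub_sum_inner_div_smul_le (hξ : Pairwise fun m n => ⟪ξ m, ξ n⟫_𝕜 = 0)
    (s : Finset ι) (w : E) (a : ι → 𝕜) :
    ‖w - ∑ n ∈ s, (⟪ξ n, w⟫_𝕜 / (‖ξ n‖ : 𝕜) ^ 2) • ξ n‖ ≤ ‖w - ∑ n ∈ s, a n • ξ n‖ := by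
  classical
  rw [← starProjection_span_image_eq_sum hξ]
  exact norm_sub_starProjection_le w
    (sum_mem fun n hn => smul_mem _ _ (subset_span (Finset.mem_image_of_mem ξ hn)))

end PairwiseOrthogonal

section Synthesis

variable {𝕜 E ι κ : Type*} [RCLike 𝕜] [NormedAddCommGroup E] [InnerProductSpace 𝕜 E] [Fintype ι]

theorem inner_sum_smul_eq_ite_of_gram_mulVec_eq [DecidableEq κ] (φ : ι → E)
    {v : κ → EuclideanSpace 𝕜 ι} (hv : Orthonormal 𝕜 v) {σ : κ → ℝ}
    (heig : ∀ n, gram 𝕜 φ *ᵥ (v n).ofLp = (σ n : 𝕜) • (v n).ofLp) (m n : κ) :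
    ⟪∑ k, v m k • φ k, ∑ k, v n k • φ k⟫_𝕜 = if m = n then (σ n : 𝕜) else 0 := by
  rw [← star_dotProduct_gram_mulVec, heig, dotProduct_smul, dotProduct_comm,
    ← EuclideanSpace.inner_eq_star_dotProduct, orthonormal_iff_ite.1 hv, smul_eq_mul, mul_ite,
    mul_one, mul_zero]

theorem sum_smul_eq_sum_inner_smul [Fintype κ] (b : OrthonormalBasis κ 𝕜 (EuclideanSpace 𝕜 ι))
    (φ : ι → E) (z : EuclideanSpace 𝕜 ι) :
    ∑ k, z k • φ k = ∑ n, ⟪b n, z⟫_𝕜 • ∑ k, b n k • φ k := by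
  have h := congrArg
    (Fintype.linearCombination 𝕜 φ ∘ₗ (WithLp.linearEquiv 2 𝕜 (ι → 𝕜)).toLinearMap)
    (b.sum_repr' z)
  simpa [Fintype.linearCombination_apply] using h.symm

end Synthesis

theorem stmt_8_general {H : Type*} [NormedAddCommGroup H] [InnerProductSpace ℂ H]
    {N : ℕ} (φ : Fin N → H) (σ : Fin N → ℝ)
    (v : Fin N → EuclideanSpace ℂ (Fin N)) (hv : Orthonormal ℂ v)
    (G : Matrix (Fin N) (Fin N) ℂ) (hG : ∀ m k, G m k = ⟪φ m, φ k⟫)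
    (heig : ∀ n i, G.mulVec (fun j => v n j) i = (σ n : ℂ) * v n i)
    (T : EuclideanSpace ℂ (Fin N) → H) (hT : ∀ z, T z = ∑ n, z n • φ n)
    (ξ : Fin N → H) (hξ : ∀ n, ξ n = T (v n))
    (ε : ℝ)
    (f : H) (z : EuclideanSpace ℂ (Fin N)) :
    ‖f - ∑ n ∈ Finset.univ.filter (fun n => ε < σ n),
        (⟪ξ n, f⟫ / (σ n : ℂ)) • ξ n‖ ≤
      ‖f - T z‖ + Real.sqrt ε * ‖z‖ := by
  have hGram : G = gram ℂ φ := Matrix.ext hG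
  have hξξ : ∀ m n, ⟪ξ m, ξ n⟫ = if m = n then (σ n : ℂ) else 0 := fun m n => by
    rw [hξ, hξ, hT, hT]
    exact inner_sum_smul_eq_ite_of_gram_mulVec_eq φ hv
      (fun n => funext fun i => by simpa [hGram] using heig n i) m n
  have horth : Pairwise fun m n => ⟪ξ m, ξ n⟫ = 0 := fun m n h => (hξξ m n).trans (if_neg h)
  have hσ_norm : ∀ n, σ n = ‖ξ n‖ ^ 2 := fun n => by
    have h := inner_self_eq_norm_sq_to_K (𝕜 := ℂ) (ξ n)
    rw [hξξ, if_pos rfl] at h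
    exact_mod_cast congrArg Complex.re h
  have hTz : T z = ∑ n, ⟪v n, z⟫ • ξ n := by
    let b := OrthonormalBasis.mk hv
      (hv.linearIndependent.span_eq_top_of_card_eq_finrank' (by simp)).ge
    simpa only [hT, hξ, b, OrthonormalBasis.coe_mk] using sum_smul_eq_sum_inner_smul b φ z
  have hcoeff : ∀ n, ⟪ξ n, f⟫ / (σ n : ℂ) = ⟪ξ n, f⟫_ℂ / (‖ξ n‖ : ℂ) ^ 2 := fun n => by
    rw [hσ_norm]; push_cast; rfl
  simp only [hcoeff]
  calc _ ≤ ‖f - ∑ n ∈ Finset.univ.filter (fun n => ε < σ n), ⟪v n, z⟫ • ξ n‖ :=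
        norm_sub_sum_inner_div_smul_le horth _ f _
    _ = ‖(f - T z) + ∑ n ∈ Finset.univ.filter (fun n => ¬ε < σ n), ⟪v n, z⟫ • ξ n‖ := by
      rw [hTz, ← Finset.sum_filter_add_sum_filter_not Finset.univ fun n => ε < σ n]
      abel_nf
    _ ≤ ‖f - T z‖ + √ε * √(∑ n ∈ Finset.univ.filter (fun n => ¬ε < σ n), ‖⟪v n, z⟫‖ ^ 2) :=
      (norm_add_le _ _).trans <| add_le_add le_rfl <| norm_sum_smul_le_of_pairwise_orthogonal horth
        (fun n hn => (hσ_norm n).symm.trans_le (not_lt.1 (Finset.mem_filter.1 hn).2)) _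
    _ ≤ ‖f - T z‖ + √ε * ‖z‖ := by
      gcongr
      exact (Real.sqrt_le_sqrt (hv.sum_inner_products_le z)).trans_eq (Real.sqrt_sq (norm_nonneg z))

theorem stmt_8 {H : Type*} [NormedAddCommGroup H] [InnerProductSpace ℂ H]
    {N : ℕ} (φ : Fin N → H) (σ : Fin N → ℝ)
    (v : Fin N → EuclideanSpace ℂ (Fin N)) (hv : Orthonormal ℂ v)
    (G : Matrix (Fin N) (Fin N) ℂ) (hG : ∀ m k, G m k = ⟪φ m, φ k⟫)
    (heig : ∀ n i, G.mulVec (fun j => v n j) i = (σ n : ℂ) * v n i)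
    (T : EuclideanSpace ℂ (Fin N) → H) (hT : ∀ z, T z = ∑ n, z n • φ n)
    (ξ : Fin N → H) (hξ : ∀ n, ξ n = T (v n))
    (hσ : ∀ n, 0 ≤ σ n) (ε : ℝ) (hε : 0 < ε)
    (f : H) (z : EuclideanSpace ℂ (Fin N)) :
    ‖f - ∑ n ∈ Finset.univ.filter (fun n => ε < σ n),
        (⟪ξ n, f⟫ / (σ n : ℂ)) • ξ n‖ ≤
      ‖f - T z‖ + Real.sqrt ε * ‖z‖ :=
  stmt_8_general φ σ v hv G hG heig T hT ξ hξ ε f z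
end

section
/- For the TSVD coefficients x^ε = Σ_{σₙ>ε}(⟨y,vₙ⟩/σₙ)vₙ with y = T_N* f, one has ‖x^ε‖ ≤ ‖f − T_N z‖/√ε + ‖z‖ for all z ∈ ℂᴺ. -/
/-!
Because `v n` is an eigenvector of the Gram matrix, `⟪T (v m), T a⟫ = σ m ⟪v m, a⟫`. Hence the
vectors `T (v n)` are orthogonal with `‖T (v n)‖² = σ n`, and `⟪v n, y⟫ = ⟪T (v n), f⟫`. Splitting
`f = w + T z` with `w = f - T z` turns each coefficient of `x^ε` into
`⟪T (v n), w⟫ / σ n + ⟪v n, z⟫`. The second part is a partial orthonormal expansion of `z`, of norm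
at most `‖z‖`. The first has squared norm `∑ |⟪T (v n), w⟫|² / σ n² ≤ ε⁻¹ ∑ |⟪T (v n), w⟫|² / σ n`,
and the last sum is at most `‖w‖²` by Bessel's inequality for the orthonormal family
`T (v n) / √(σ n)`, `σ n > ε`.
-/

open Finset RCLike

section Orthogonal

variable {𝕜 E F ι : Type*} [RCLike 𝕜] [NormedAddCommGroup E] [InnerProductSpace 𝕜 E]
  [NormedAddCommGroup F] [InnerProductSpace 𝕜 F]

local notation "⟪" x ", " y "⟫" => inner 𝕜 x y

theorem Orthonormal.norm_sum_smul_sq {v : ι → E} (hv : Orthonormal 𝕜 v) (c : ι → 𝕜)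
    (s : Finset ι) : ‖∑ i ∈ s, c i • v i‖ ^ 2 = ∑ i ∈ s, ‖c i‖ ^ 2 := by
  simpa using hv.orthogonalFamily.norm_sum c s

theorem Orthonormal.norm_sum_smul_le {v : ι → E} (hv : Orthonormal 𝕜 v) {c : ι → 𝕜}
    {s : Finset ι} {R : ℝ} (hR : 0 ≤ R) (h : ∑ i ∈ s, ‖c i‖ ^ 2 ≤ R ^ 2) :
    ‖∑ i ∈ s, c i • v i‖ ≤ R :=
  (pow_le_pow_iff_left₀ (norm_nonneg _) hR two_ne_zero).mp (hv.norm_sum_smul_sq c s ▸ h)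

theorem Orthonormal.norm_sum_inner_smul_le {v : ι → E} (hv : Orthonormal 𝕜 v) (s : Finset ι)
    (x : E) : ‖∑ i ∈ s, ⟪v i, x⟫ • v i‖ ≤ ‖x‖ :=
  hv.norm_sum_smul_le (norm_nonneg x) (hv.sum_inner_products_le x)

theorem sum_norm_inner_sq_div_norm_sq_le {e : ι → E} (he : Pairwise fun i j => ⟪e i, e j⟫ = 0)
    {s : Finset ι} (hs : ∀ i ∈ s, e i ≠ 0) (x : E) :
    ∑ i ∈ s, ‖⟪e i, x⟫‖ ^ 2 / ‖e i‖ ^ 2 ≤ ‖x‖ ^ 2 := by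
  let u : s → E := fun i => (‖e i‖ : 𝕜)⁻¹ • e i
  have hu : Orthonormal 𝕜 u := by
    refine ⟨fun i => norm_smul_inv_norm (hs i i.2), fun i j hij => ?_⟩
    simp [u, inner_smul_left, inner_smul_right, he (Subtype.coe_injective.ne hij)]
  calc ∑ i ∈ s, ‖⟪e i, x⟫‖ ^ 2 / ‖e i‖ ^ 2 = ∑ i : s, ‖⟪u i, x⟫‖ ^ 2 := by
        rw [← sum_attach s, ← univ_eq_attach]
        refine sum_congr rfl fun i _ => ?_
        simp [u, inner_smul_left, mul_pow, div_eq_inv_mul]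
    _ ≤ ‖x‖ ^ 2 := hu.sum_inner_products_le x

theorem Orthonormal.norm_sum_inner_div_norm_sq_smul_le {v : ι → E} (hv : Orthonormal 𝕜 v)
    {e : ι → F} (he : Pairwise fun i j => ⟪e i, e j⟫ = 0) {s : Finset ι} {ε : ℝ} (hε : 0 < ε)
    (hs : ∀ i ∈ s, ε ≤ ‖e i‖ ^ 2) (x : F) :
    ‖∑ i ∈ s, (⟪e i, x⟫ / ((‖e i‖ ^ 2 : ℝ) : 𝕜)) • v i‖ ≤ ‖x‖ / √ε := by
  refine hv.norm_sum_smul_le (by positivity) ?_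
  have hpos : ∀ i ∈ s, 0 < ‖e i‖ ^ 2 := fun i hi => hε.trans_le (hs i hi)
  calc ∑ i ∈ s, ‖⟪e i, x⟫ / ((‖e i‖ ^ 2 : ℝ) : 𝕜)‖ ^ 2
      ≤ ∑ i ∈ s, ‖⟪e i, x⟫‖ ^ 2 / ‖e i‖ ^ 2 / ε := by
        refine sum_le_sum fun i hi => ?_
        rw [norm_div, norm_ofReal, abs_of_pos (hpos i hi), div_pow, div_div]
        refine div_le_div_of_nonneg_left (by positivity) (mul_pos (hpos i hi) hε) ?_
        rw [sq (‖e i‖ ^ 2)]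
        exact mul_le_mul_of_nonneg_left (hs i hi) (hpos i hi).le
    _ = (∑ i ∈ s, ‖⟪e i, x⟫‖ ^ 2 / ‖e i‖ ^ 2) / ε := (sum_div ..).symm
    _ ≤ ‖x‖ ^ 2 / ε := by
        gcongr
        exact sum_norm_inner_sq_div_norm_sq_le he
          (fun i hi hi0 => (hpos i hi).ne' (by simp [hi0])) x
    _ = (‖x‖ / √ε) ^ 2 := by rw [div_pow, Real.sq_sqrt hε.le]

end Orthogonal

section Gram

variable {𝕜 H ι : Type*} [RCLike 𝕜] [NormedAddCommGroup H] [InnerProductSpace 𝕜 H] [Fintype ι]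
  (φ : ι → H)

local notation "⟪" x ", " y "⟫" => inner 𝕜 x y

theorem inner_sum_smul_left_eq_inner {f : H} {y : EuclideanSpace 𝕜 ι}
    (hy : ∀ i, y i = ⟪φ i, f⟫) (a : EuclideanSpace 𝕜 ι) :
    ⟪∑ i, a i • φ i, f⟫ = ⟪a, y⟫ := by
  simp [sum_inner, inner_smul_left, PiLp.inner_apply, hy, mul_comm]

theorem inner_sum_smul_of_gram_eigenvector {G : Matrix ι ι 𝕜} (hG : ∀ i j, G i j = ⟪φ i, φ j⟫)
    {u : EuclideanSpace 𝕜 ι} {σ : ℝ} (hu : ∀ i, G.mulVec (fun j => u j) i = σ * u i)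
    (a : EuclideanSpace 𝕜 ι) :
    ⟪∑ i, u i • φ i, ∑ i, a i • φ i⟫ = σ * ⟪u, a⟫ := by
  have hGu : ∀ i, ((σ : 𝕜) • u) i = ⟪φ i, ∑ j, u j • φ j⟫ := fun i => by
    rw [PiLp.smul_apply, smul_eq_mul, ← hu]
    simp [Matrix.mulVec, dotProduct, inner_sum, inner_smul_right, hG, mul_comm]
  rw [← inner_conj_symm, inner_sum_smul_left_eq_inner φ hGu, inner_smul_right, map_mul, conj_ofReal,
    inner_conj_symm]

end Gram

open scoped ComplexInnerProductSpace

theorem stmt_9_general {H : Type*} [NormedAddCommGroup H] [InnerProductSpace ℂ H]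
    {N : ℕ} (φ : Fin N → H) (σ : Fin N → ℝ)
    (v : Fin N → EuclideanSpace ℂ (Fin N)) (hv : Orthonormal ℂ v)
    (G : Matrix (Fin N) (Fin N) ℂ) (hG : ∀ m k, G m k = ⟪φ m, φ k⟫)
    (heig : ∀ n i, G.mulVec (fun j => v n j) i = (σ n : ℂ) * v n i)
    (T : EuclideanSpace ℂ (Fin N) → H) (hT : ∀ z, T z = ∑ n, z n • φ n)
    (ε : ℝ) (hε : 0 < ε)
    (f : H) (y : EuclideanSpace ℂ (Fin N)) (hy : ∀ n, y n = ⟪φ n, f⟫)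
    (z : EuclideanSpace ℂ (Fin N)) :
    ‖∑ n ∈ Finset.univ.filter (fun n => ε < σ n),
        (⟪v n, y⟫ / (σ n : ℂ)) • v n‖ ≤
      ‖f - T z‖ / Real.sqrt ε + ‖z‖ := by
  have hTv : ∀ m a, ⟪T (v m), T a⟫ = σ m * ⟪v m, a⟫ := fun m a => by
    rw [hT, hT]
    exact inner_sum_smul_of_gram_eigenvector φ hG (heig m) a
  have hnorm : ∀ n, ‖T (v n)‖ ^ 2 = σ n := fun n => by
    have h := hTv n (v n)
    rw [inner_self_eq_norm_sq_to_K, inner_self_eq_norm_sq_to_K, hv.norm_eq_one, RCLike.ofReal_one,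
      one_pow, mul_one] at h
    exact Complex.ofReal_injective (by push_cast; exact h)
  have horth : Pairwise fun m n => ⟪T (v m), T (v n)⟫ = 0 := fun m n hmn =>
    (hTv m (v n)).trans (by rw [hv.inner_eq_zero hmn, mul_zero])
  have hcoef : ∀ n ∈ univ.filter (fun n => ε < σ n), ⟪v n, y⟫ / (σ n : ℂ) =
      ⟪T (v n), f - T z⟫ / ((‖T (v n)‖ ^ 2 : ℝ) : ℂ) + ⟪v n, z⟫ := fun n hn => by
    have hσ : (σ n : ℂ) ≠ 0 := Complex.ofReal_ne_zero.mpr (hε.trans (mem_filter.mp hn).2).ne'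
    rw [hnorm, ← inner_sum_smul_left_eq_inner φ hy, ← hT, inner_sub_right, hTv]
    field_simp
    ring
  rw [sum_congr rfl fun n hn => by rw [hcoef n hn, add_smul], sum_add_distrib]
  refine (norm_add_le _ _).trans (add_le_add ?_ (hv.norm_sum_inner_smul_le _ z))
  exact hv.norm_sum_inner_div_norm_sq_smul_le horth hε
    (fun n hn => (hnorm n).symm ▸ (mem_filter.mp hn).2.le) _

theorem stmt_9 {H : Type*} [NormedAddCommGroup H] [InnerProductSpace ℂ H]
    {N : ℕ} (φ : Fin N → H) (σ : Fin N → ℝ)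
    (v : Fin N → EuclideanSpace ℂ (Fin N)) (hv : Orthonormal ℂ v)
    (G : Matrix (Fin N) (Fin N) ℂ) (hG : ∀ m k, G m k = ⟪φ m, φ k⟫)
    (heig : ∀ n i, G.mulVec (fun j => v n j) i = (σ n : ℂ) * v n i)
    (T : EuclideanSpace ℂ (Fin N) → H) (hT : ∀ z, T z = ∑ n, z n • φ n)
    (ξ : Fin N → H) (hξ : ∀ n, ξ n = T (v n))
    (hσ : ∀ n, 0 ≤ σ n) (ε : ℝ) (hε : 0 < ε)
    (f : H) (y : EuclideanSpace ℂ (Fin N)) (hy : ∀ n, y n = ⟪φ n, f⟫)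
    (z : EuclideanSpace ℂ (Fin N)) :
    ‖∑ n ∈ Finset.univ.filter (fun n => ε < σ n),
        (⟪v n, y⟫ / (σ n : ℂ)) • v n‖ ≤
      ‖f - T z‖ / Real.sqrt ε + ‖z‖ :=
  stmt_9_general φ σ v hv G hG heig T hT ε hε f y hy z
end

section
/- For the ASVD1 method with parameters ε > 0 and c > 0, i.e., Λ = {n : σₙ > ε and |⟨y,vₙ⟩|/σₙ ≤ c‖y‖}, the error satisfies ‖f − P_Λ f‖ ≤ ‖f − T_N z‖ + max{√ε, ‖f − T_N z‖/(c‖y‖ − ‖z‖)} ‖z‖ for every z ∈ ℂᴺ with ‖z‖ < c‖y‖. -/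
/-!
Expand `z = ∑ ⟪vₙ, z⟫ vₙ`, so `T z = ∑ ⟪vₙ, z⟫ ξₙ` with the `ξₙ` pairwise orthogonal and
`‖ξₙ‖² = σₙ`. The part of `T z` over `Λ` lies in the range of `P_Λ`, hence `f - P_Λ f` is no
longer than `f - T z` plus the part over the complement of `Λ`, whose norm is at most `M ‖z‖`
as soon as `σₙ ≤ M²` off `Λ`, for `M = max (√ε) (‖f - T z‖ / (c ‖y‖ - ‖z‖))`. An index `n ∉ Λ`
either has `σₙ ≤ ε`, or a large coefficient `|⟪vₙ, y⟫| > c ‖y‖ σₙ`; since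
`⟪ξₙ, f - T z⟫ = ⟪vₙ, y⟫ - σₙ ⟪vₙ, z⟫`, Cauchy–Schwarz then gives
`σₙ (c ‖y‖ - ‖z‖) ≤ √σₙ ‖f - T z‖`.
-/

open scoped ComplexInnerProductSpace InnerProductSpace
open Finset Matrix

theorem norm_sub_le_norm_sub_of_inner_eq_zero {𝕜 E : Type*} [RCLike 𝕜] [NormedAddCommGroup E]
    [InnerProductSpace 𝕜 E] {f p w : E} (h : ⟪p - w, f - p⟫_𝕜 = 0) : ‖f - p‖ ≤ ‖f - w‖ := by
  have hpyth := norm_add_sq_eq_norm_sq_add_norm_sq_of_inner_eq_zero (𝕜 := 𝕜) (f - p) (p - w)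
    (by rw [← inner_conj_symm, h, map_zero])
  rw [sub_add_sub_cancel] at hpyth
  rw [mul_self_le_mul_self_iff (norm_nonneg _) (norm_nonneg _), hpyth]
  exact le_add_of_nonneg_right (mul_self_nonneg _)

theorem Orthonormal.sum_inner_smul_eq_self {𝕜 E ι : Type*} [RCLike 𝕜] [NormedAddCommGroup E]
    [InnerProductSpace 𝕜 E] [FiniteDimensional 𝕜 E] [Fintype ι] {v : ι → E}
    (hv : Orthonormal 𝕜 v) (hcard : Fintype.card ι = Module.finrank 𝕜 E) (z : E) :
    ∑ n, ⟪v n, z⟫_𝕜 • v n = z := by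
  have hspan := hv.linearIndependent.span_eq_top_of_card_eq_finrank' hcard
  simpa only [OrthonormalBasis.coe_mk] using (OrthonormalBasis.mk hv hspan.ge).sum_repr' z

section OrthogonalSystem

variable {E ι : Type*} [NormedAddCommGroup E] [InnerProductSpace ℂ E] [DecidableEq ι]
  {ξ : ι → E} {σ : ι → ℝ} {s : Finset ι}

theorem inner_sum_smul_of_inner_eq_ite (hξ : ∀ n m, ⟪ξ n, ξ m⟫ = if n = m then (σ n : ℂ) else 0)
    {n : ι} (hn : n ∈ s) (a : ι → ℂ) : ⟪ξ n, ∑ m ∈ s, a m • ξ m⟫ = σ n * a n := by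
  simp [hξ, hn, mul_comm]

theorem norm_eq_sqrt_of_inner_eq_ite (hξ : ∀ n m, ⟪ξ n, ξ m⟫ = if n = m then (σ n : ℂ) else 0)
    (n : ι) : ‖ξ n‖ = √(σ n) := by
  rw [norm_eq_sqrt_re_inner (𝕜 := ℂ), hξ, if_pos rfl]
  simp

theorem norm_sq_sum_smul_of_inner_eq_ite
    (hξ : ∀ n m, ⟪ξ n, ξ m⟫ = if n = m then (σ n : ℂ) else 0) (a : ι → ℂ) :
    ‖∑ n ∈ s, a n • ξ n‖ ^ 2 = ∑ n ∈ s, σ n * ‖a n‖ ^ 2 := by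
  have hterm : ∀ n ∈ s, ⟪a n • ξ n, ∑ m ∈ s, a m • ξ m⟫ = ((σ n * ‖a n‖ ^ 2 : ℝ) : ℂ) := by
    intro n hn
    rw [inner_smul_left, inner_sum_smul_of_inner_eq_ite hξ hn, mul_left_comm,
      Complex.conj_mul']
    push_cast
    ring
  rw [@norm_sq_eq_re_inner ℂ, sum_inner, sum_congr rfl hterm,
    ← Complex.ofReal_sum]
  exact RCLike.ofReal_re _

theorem norm_sub_sum_div_smul_le (hξ : ∀ n m, ⟪ξ n, ξ m⟫ = if n = m then (σ n : ℂ) else 0)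
    (hσ : ∀ n ∈ s, σ n ≠ 0) (f : E) (a : ι → ℂ) :
    ‖f - ∑ n ∈ s, (⟪ξ n, f⟫ / σ n) • ξ n‖ ≤ ‖f - ∑ n ∈ s, a n • ξ n‖ := by
  apply norm_sub_le_norm_sub_of_inner_eq_zero (𝕜 := ℂ)
  rw [← sum_sub_distrib, sum_inner]
  refine sum_eq_zero fun n hn => ?_
  rw [← sub_smul, inner_smul_left, inner_sub_right, inner_sum_smul_of_inner_eq_ite hξ hn,
    mul_div_cancel₀ _ (Complex.ofReal_ne_zero.mpr (hσ n hn)), sub_self, mul_zero]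

theorem norm_sum_inner_smul_le {F : Type*} [NormedAddCommGroup F] [InnerProductSpace ℂ F]
    {v : ι → F} (hv : Orthonormal ℂ v)
    (hξ : ∀ n m, ⟪ξ n, ξ m⟫ = if n = m then (σ n : ℂ) else 0)
    {M : ℝ} (hM0 : 0 ≤ M) (hM : ∀ n ∈ s, σ n ≤ M ^ 2) (z : F) :
    ‖∑ n ∈ s, ⟪v n, z⟫ • ξ n‖ ≤ M * ‖z‖ := by
  rw [← sq_le_sq₀ (norm_nonneg _) (by positivity), norm_sq_sum_smul_of_inner_eq_ite hξ, mul_pow]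
  calc ∑ n ∈ s, σ n * ‖⟪v n, z⟫‖ ^ 2 ≤ ∑ n ∈ s, M ^ 2 * ‖⟪v n, z⟫‖ ^ 2 :=
        sum_le_sum fun n hn => mul_le_mul_of_nonneg_right (hM n hn) (sq_nonneg _)
    _ = M ^ 2 * ∑ n ∈ s, ‖⟪v n, z⟫‖ ^ 2 := (mul_sum _ _ _).symm
    _ ≤ M ^ 2 * ‖z‖ ^ 2 := mul_le_mul_of_nonneg_left (hv.sum_inner_products_le z) (sq_nonneg _)

end OrthogonalSystem

theorem sqrt_le_div_of_lt_norm_div {E : Type*} [NormedAddCommGroup E] [InnerProductSpace ℂ E]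
    {ξ g : E} {σ κ r : ℝ} {α β : ℂ} (hσ : 0 < σ) (hξ : ‖ξ‖ = √σ)
    (hinner : ⟪ξ, g⟫ = β - σ * α) (hα : ‖α‖ ≤ r) (hr : r < κ) (hβ : κ < ‖β‖ / σ) :
    √σ ≤ ‖g‖ / (κ - r) := by
  rw [le_div_iff₀ (sub_pos.2 hr)]
  have hβ' : σ * κ < ‖β‖ := by rwa [lt_div_iff₀ hσ, mul_comm] at hβ
  have hσα : ‖(σ : ℂ) * α‖ ≤ σ * r := by
    rw [norm_mul, Complex.norm_real, Real.norm_of_nonneg hσ.le]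
    exact mul_le_mul_of_nonneg_left hα hσ.le
  refine le_of_mul_le_mul_left ?_ (Real.sqrt_pos.2 hσ)
  calc √σ * (√σ * (κ - r)) = σ * κ - σ * r := by
        rw [← mul_assoc, Real.mul_self_sqrt hσ.le, mul_sub]
    _ ≤ ‖β‖ - ‖(σ : ℂ) * α‖ := by linarith
    _ ≤ ‖⟪ξ, g⟫‖ := hinner ▸ norm_sub_norm_le _ _
    _ ≤ √σ * ‖g‖ := hξ ▸ norm_inner_le_norm _ _

section Synthesis

variable {H ι : Type*} [NormedAddCommGroup H] [InnerProductSpace ℂ H] [Fintype ι]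

noncomputable def synthesis (φ : ι → H) : EuclideanSpace ℂ ι →ₗ[ℂ] H :=
  (Fintype.linearCombination ℂ φ).comp (WithLp.linearEquiv 2 ℂ (ι → ℂ)).toLinearMap

theorem synthesis_apply (φ : ι → H) (z : EuclideanSpace ℂ ι) :
    synthesis φ z = ∑ n, z n • φ n :=
  Fintype.linearCombination_apply ℂ φ _

theorem inner_synthesis_left {φ : ι → H} {f : H} {y : EuclideanSpace ℂ ι}
    (hy : ∀ n, y n = ⟪φ n, f⟫) (b : EuclideanSpace ℂ ι) : ⟪synthesis φ b, f⟫ = ⟪b, y⟫ := by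
  simp [synthesis_apply, PiLp.inner_apply, hy]

theorem inner_synthesis_of_mulVec_eq_smul {φ : ι → H} {u : EuclideanSpace ℂ ι} {μ : ℂ}
    (hu : gram ℂ φ *ᵥ u = μ • u) (b : EuclideanSpace ℂ ι) :
    ⟪synthesis φ b, synthesis φ u⟫ = μ * ⟪b, u⟫ := by
  rw [synthesis_apply, synthesis_apply, ← star_dotProduct_gram_mulVec, hu, dotProduct_smul,
    EuclideanSpace.inner_eq_star_dotProduct, dotProduct_comm, smul_eq_mul]

theorem inner_synthesis_eq_ite [DecidableEq ι] {φ : ι → H} {σ : ι → ℝ}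
    {v : ι → EuclideanSpace ℂ ι} (hv : Orthonormal ℂ v)
    (heig : ∀ n, gram ℂ φ *ᵥ v n = (σ n : ℂ) • v n) (n m : ι) :
    ⟪synthesis φ (v n), synthesis φ (v m)⟫ = if n = m then (σ n : ℂ) else 0 := by
  rw [inner_synthesis_of_mulVec_eq_smul (heig m), orthonormal_iff_ite.mp hv]
  split_ifs with h
  · rw [h, mul_one]
  · rw [mul_zero]

end Synthesis

theorem stmt_10_general {H : Type*} [NormedAddCommGroup H] [InnerProductSpace ℂ H]
    {N : ℕ} (φ : Fin N → H) (σ : Fin N → ℝ)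
    (v : Fin N → EuclideanSpace ℂ (Fin N)) (hv : Orthonormal ℂ v)
    (G : Matrix (Fin N) (Fin N) ℂ) (hG : ∀ m k, G m k = ⟪φ m, φ k⟫)
    (heig : ∀ n i, G.mulVec (fun j => v n j) i = (σ n : ℂ) * v n i)
    (T : EuclideanSpace ℂ (Fin N) → H) (hT : ∀ z, T z = ∑ n, z n • φ n)
    (ξ : Fin N → H) (hξ : ∀ n, ξ n = T (v n))
    (ε c : ℝ) (hε : 0 < ε)
    (f : H) (y : EuclideanSpace ℂ (Fin N)) (hy : ∀ n, y n = ⟪φ n, f⟫)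
    (z : EuclideanSpace ℂ (Fin N)) (hz : ‖z‖ < c * ‖y‖) :
    ‖f - ∑ n ∈ Finset.univ.filter (fun n => ε < σ n ∧ ‖⟪v n, y⟫‖ / σ n ≤ c * ‖y‖),
        (⟪ξ n, f⟫ / (σ n : ℂ)) • ξ n‖ ≤
      ‖f - T z‖ + max (Real.sqrt ε) (‖f - T z‖ / (c * ‖y‖ - ‖z‖)) * ‖z‖ := by
  obtain rfl : G = gram ℂ φ := Matrix.ext hG
  obtain rfl : T = synthesis φ := funext fun b => (hT b).trans (synthesis_apply φ b).symm
  obtain rfl : ξ = fun n => synthesis φ (v n) := funext hξ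
  have hξξ := inner_synthesis_eq_ite hv fun n => funext (heig n)
  set Λ := univ.filter fun n => ε < σ n ∧ ‖⟪v n, y⟫‖ / σ n ≤ c * ‖y‖
  set M := max √ε (‖f - synthesis φ z‖ / (c * ‖y‖ - ‖z‖))
  have hM0 : 0 ≤ M := (Real.sqrt_nonneg ε).trans (le_max_left _ _)
  have hTz : synthesis φ z = ∑ n, ⟪v n, z⟫ • synthesis φ (v n) := by
    conv_lhs => rw [← hv.sum_inner_smul_eq_self (by simp) z, map_sum]
    simp only [map_smul]
  have hΛ : ∀ n ∈ Λ, σ n ≠ 0 := fun n hn => (hε.trans (mem_filter.1 hn).2.1).ne'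
  have hΛc : ∀ n ∈ Λᶜ, σ n ≤ M ^ 2 := by
    intro n hn
    rw [mem_compl, mem_filter, not_and, not_and, not_le] at hn
    refine (Real.sqrt_le_left hM0).1 ?_
    by_cases hεn : ε < σ n
    · have hcoeff : ‖⟪v n, z⟫‖ ≤ ‖z‖ := by
        simpa [hv.1 n] using norm_inner_le_norm (v n) z
      have hinner : ⟪synthesis φ (v n), f - synthesis φ z⟫ = ⟪v n, y⟫ - σ n * ⟪v n, z⟫ := by
        rw [inner_sub_right, inner_synthesis_left hy, hTz,
          inner_sum_smul_of_inner_eq_ite hξξ (mem_univ n)]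
      exact (sqrt_le_div_of_lt_norm_div (hε.trans hεn) (norm_eq_sqrt_of_inner_eq_ite hξξ n)
        hinner hcoeff hz (hn (mem_univ n) hεn)).trans (le_max_right _ _)
    · exact (Real.sqrt_le_sqrt (not_lt.1 hεn)).trans (le_max_left _ _)
  calc _ ≤ ‖f - ∑ n ∈ Λ, ⟪v n, z⟫ • synthesis φ (v n)‖ := norm_sub_sum_div_smul_le hξξ hΛ f _
    _ = ‖(f - synthesis φ z) + ∑ n ∈ Λᶜ, ⟪v n, z⟫ • synthesis φ (v n)‖ := by
      rw [hTz, ← sum_compl_add_sum Λ]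
      abel_nf
    _ ≤ _ := (norm_add_le _ _).trans
      (add_le_add_right (norm_sum_inner_smul_le hv hξξ hM0 hΛc z) _)

theorem stmt_10 {H : Type*} [NormedAddCommGroup H] [InnerProductSpace ℂ H]
    {N : ℕ} (φ : Fin N → H) (σ : Fin N → ℝ)
    (v : Fin N → EuclideanSpace ℂ (Fin N)) (hv : Orthonormal ℂ v)
    (G : Matrix (Fin N) (Fin N) ℂ) (hG : ∀ m k, G m k = ⟪φ m, φ k⟫)
    (heig : ∀ n i, G.mulVec (fun j => v n j) i = (σ n : ℂ) * v n i)
    (T : EuclideanSpace ℂ (Fin N) → H) (hT : ∀ z, T z = ∑ n, z n • φ n)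
    (ξ : Fin N → H) (hξ : ∀ n, ξ n = T (v n))
    (hσ : ∀ n, 0 ≤ σ n) (ε c : ℝ) (hε : 0 < ε) (hc : 0 < c)
    (f : H) (y : EuclideanSpace ℂ (Fin N)) (hy : ∀ n, y n = ⟪φ n, f⟫)
    (z : EuclideanSpace ℂ (Fin N)) (hz : ‖z‖ < c * ‖y‖) :
    ‖f - ∑ n ∈ Finset.univ.filter (fun n => ε < σ n ∧ ‖⟪v n, y⟫‖ / σ n ≤ c * ‖y‖),
        (⟪ξ n, f⟫ / (σ n : ℂ)) • ξ n‖ ≤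
      ‖f - T z‖ + max (Real.sqrt ε) (‖f - T z‖ / (c * ‖y‖ - ‖z‖)) * ‖z‖ :=
  stmt_10_general φ σ v hv G hG heig T hT ξ hξ ε c hε f y hy z hz
end

section
/- Let Φ be a frame for H with lower frame bound A and let f ∈ H. If a ≥ 1/√A and 0 < δ < 1, then there exists N₀ such that for all N ≥ N₀, f has the (a,δ)-stable approximation property: there is z ∈ ℂᴺ with ‖f − T_N z‖ ≤ δ‖f‖ and ‖z‖ ≤ a‖f‖. -/
/-!
Take for `z` the canonical coefficients `cₙ = ⟪φₙ, S⁻¹f⟫`, truncated to `I N`. Since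
`f = ∑ cₙ φₙ`, the truncated sums converge to `f`, which gives the approximation for large `N`.
For the size of `z`, write `g = S⁻¹f`: then `∑ |cₙ|² = re ⟪g, f⟫ ≤ ‖g‖ ‖f‖`, and the lower frame
bound `A ‖g‖² ≤ ∑ |cₙ|²` forces `A ‖g‖ ≤ ‖f‖`, hence `∑ |cₙ|² ≤ ‖f‖² / A ≤ a² ‖f‖²`.
-/

open scoped ComplexInnerProductSpace InnerProductSpace
open Filter Topology

section FrameCoefficients

variable {𝕜 H ι : Type*} [RCLike 𝕜] [NormedAddCommGroup H] [InnerProductSpace 𝕜 H]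
  {φ : ι → H} {f g : H}

theorem hasSum_norm_inner_sq_of_hasSum_inner_smul
    (hg : HasSum (fun n => ⟪φ n, g⟫_𝕜 • φ n) f) :
    HasSum (fun n => ‖⟪φ n, g⟫_𝕜‖ ^ 2) (RCLike.re ⟪g, f⟫_𝕜) := by
  have hinner : HasSum (fun n => ⟪g, ⟪φ n, g⟫_𝕜 • φ n⟫_𝕜) ⟪g, f⟫_𝕜 :=
    (innerSL 𝕜 g).hasSum hg
  have hterm : ∀ n, ⟪g, ⟪φ n, g⟫_𝕜 • φ n⟫_𝕜 = ((‖⟪φ n, g⟫_𝕜‖ ^ 2 : ℝ) : 𝕜) := fun n => by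
    rw [inner_smul_right, ← inner_conj_symm g (φ n), RCLike.mul_conj, RCLike.ofReal_pow]
  simp only [hterm] at hinner
  simpa using RCLike.reCLM.hasSum hinner

theorem tsum_norm_inner_sq_le_of_lower_bound {A : ℝ} (hA : 0 < A)
    (hg : HasSum (fun n => ⟪φ n, g⟫_𝕜 • φ n) f)
    (hlower : A * ‖g‖ ^ 2 ≤ ∑' n, ‖⟪φ n, g⟫_𝕜‖ ^ 2) :
    ∑' n, ‖⟪φ n, g⟫_𝕜‖ ^ 2 ≤ ‖f‖ ^ 2 / A := by
  have hC : ∑' n, ‖⟪φ n, g⟫_𝕜‖ ^ 2 ≤ ‖g‖ * ‖f‖ := by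
    rw [(hasSum_norm_inner_sq_of_hasSum_inner_smul hg).tsum_eq]
    exact re_inner_le_norm g f
  have hgf : A * ‖g‖ ≤ ‖f‖ := by
    rcases (norm_nonneg g).eq_or_lt with h | h
    · rw [← h, mul_zero]; exact norm_nonneg f
    · nlinarith
  rw [le_div_iff₀ hA]
  nlinarith [norm_nonneg f]

end FrameCoefficients

theorem eventually_norm_sub_sum_finset_lt {E ι : Type*} [SeminormedAddCommGroup E]
    {u : ι → E} {f : E} (hu : HasSum u f) {I : ℕ → Finset ι} (hmono : Monotone I)
    (hcover : ∀ x, ∃ N, x ∈ I N) {ε : ℝ} (hε : 0 < ε) :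
    ∀ᶠ N in atTop, ‖f - ∑ n ∈ I N, u n‖ < ε := by
  have htend : Tendsto (fun N => ∑ n ∈ I N, u n) atTop (𝓝 f) :=
    hu.comp (tendsto_atTop_finset_of_monotone hmono hcover)
  filter_upwards [htend.eventually (Metric.ball_mem_nhds f hε)] with N hN
  rwa [← dist_eq_norm, dist_comm]

theorem stmt_18_general {H : Type*} [NormedAddCommGroup H] [InnerProductSpace ℂ H]
    {ι : Type*} (φ : ι → H) (A B : ℝ) (hA : 0 < A)
    (hframe : ∀ f : H, A * ‖f‖ ^ 2 ≤ ∑' n, ‖⟪φ n, f⟫‖ ^ 2 ∧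
      ∑' n, ‖⟪φ n, f⟫‖ ^ 2 ≤ B * ‖f‖ ^ 2)
    (S : H ≃L[ℂ] H) (hS : ∀ f : H, HasSum (fun n => ⟪φ n, f⟫ • φ n) (S f))
    (I : ℕ → Finset ι) (hmono : Monotone I) (hcover : ∀ x : ι, ∃ N, x ∈ I N)
    (f : H) (a δ : ℝ) (ha : 1 / Real.sqrt A ≤ a) (hδ0 : 0 < δ) :
    ∃ N₀ : ℕ, ∀ N ≥ N₀, ∃ z : ι → ℂ, (∀ n ∉ I N, z n = 0) ∧
      ‖f - ∑ n ∈ I N, z n • φ n‖ ≤ δ * ‖f‖ ∧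
      Real.sqrt (∑ n ∈ I N, ‖z n‖ ^ 2) ≤ a * ‖f‖ := by
  classical
  by_cases hf0 : f = 0
  · exact ⟨0, fun N _ => ⟨0, fun _ _ => rfl, by simp [hf0], by simp [hf0]⟩⟩
  set c : ι → ℂ := fun n => ⟪φ n, S.symm f⟫
  have hc : HasSum (fun n => c n • φ n) f := by simpa [c] using hS (S.symm f)
  have hcoeff : ∑' n, ‖c n‖ ^ 2 ≤ ‖f‖ ^ 2 / A :=
    tsum_norm_inner_sq_le_of_lower_bound hA hc (hframe _).1
  obtain ⟨N₀, hN₀⟩ := eventually_atTop.mp <| eventually_norm_sub_sum_finset_lt hc hmono hcover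
    (mul_pos hδ0 (norm_pos_iff.mpr hf0))
  refine ⟨N₀, fun N hN => ?_⟩
  set z : ι → ℂ := fun n => if n ∈ I N then c n else 0
  have hzc : ∀ n ∈ I N, z n = c n := fun n hn => if_pos hn
  refine ⟨z, fun n hn => if_neg hn, ?_, ?_⟩
  · rw [(Finset.sum_congr rfl fun n hn => by rw [hzc n hn] : ∑ n ∈ I N, z n • φ n = _)]
    exact (hN₀ N hN).le
  · rw [(Finset.sum_congr rfl fun n hn => by rw [hzc n hn] : ∑ n ∈ I N, ‖z n‖ ^ 2 = _)]
    calc Real.sqrt (∑ n ∈ I N, ‖c n‖ ^ 2)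
        ≤ Real.sqrt (‖f‖ ^ 2 / A) := Real.sqrt_le_sqrt <|
          (Summable.sum_le_tsum _ (fun n _ => sq_nonneg _)
            (hasSum_norm_inner_sq_of_hasSum_inner_smul hc).summable).trans hcoeff
      _ = 1 / Real.sqrt A * ‖f‖ := by
        rw [Real.sqrt_div' _ hA.le, Real.sqrt_sq (norm_nonneg f), one_div_mul_eq_div]
      _ ≤ a * ‖f‖ := mul_le_mul_of_nonneg_right ha (norm_nonneg f)

theorem stmt_18 {H : Type*} [NormedAddCommGroup H] [InnerProductSpace ℂ H] [CompleteSpace H]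
    {ι : Type*} [Countable ι] (φ : ι → H) (A B : ℝ) (hA : 0 < A) (hAB : A ≤ B)
    (hsum : ∀ f : H, Summable fun n => ‖⟪φ n, f⟫‖ ^ 2)
    (hframe : ∀ f : H, A * ‖f‖ ^ 2 ≤ ∑' n, ‖⟪φ n, f⟫‖ ^ 2 ∧
      ∑' n, ‖⟪φ n, f⟫‖ ^ 2 ≤ B * ‖f‖ ^ 2)
    (S : H ≃L[ℂ] H) (hS : ∀ f : H, HasSum (fun n => ⟪φ n, f⟫ • φ n) (S f))
    (I : ℕ → Finset ι) (hmono : Monotone I) (hcover : ∀ x : ι, ∃ N, x ∈ I N)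
    (f : H) (a δ : ℝ) (ha : 1 / Real.sqrt A ≤ a) (hδ0 : 0 < δ) (hδ1 : δ < 1) :
    ∃ N₀ : ℕ, ∀ N ≥ N₀, ∃ z : ι → ℂ, (∀ n ∉ I N, z n = 0) ∧
      ‖f - ∑ n ∈ I N, z n • φ n‖ ≤ δ * ‖f‖ ∧
      Real.sqrt (∑ n ∈ I N, ‖z n‖ ^ 2) ≤ a * ‖f‖ :=
  stmt_18_general φ A B hA hframe S hS I hmono hcover f a δ ha hδ0
end
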